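/- Let A be a unital Banach algebra over ℂ and let X_1, …, X_n ∈ A. Define F : ℝ → A by F(s) = (1/2)(∏_{j=1}^{n} exp(s • X_j) + ∏_{j=n}^{1} exp(s • X_j)). Then the third derivative of F at 0 equals Σ_j X_j³ + (3/2) Σ_{j≠k} (X_j² X_k + X_j X_k²) + 3 Σ_{1 ≤ j < k < l ≤ n} (X_j X_k X_l + X_l X_k X_j). -/

import Mathlib

open NormedSpace

/-- The symmetrized first-order Trotter product
`F(s) = ½(∏_{j=1}^{n} exp(s • X_j) + ∏_{j=n}^{1} exp(s • X_j))`. -/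
noncomputable def symTrotter {A : Type*} [NormedRing A] [NormedAlgebra ℂ A]
    [CompleteSpace A] {n : ℕ} (X : Fin n → A) (s : ℝ) : A :=
  (1 / 2 : ℝ) • ((List.ofFn fun j => exp (s • X j)).prod
    + ((List.ofFn fun j => exp (s • X j)).reverse).prod)

/-!
By the Leibniz rule, the `k`-th derivative at `0` of `t ↦ exp (t • x) * g t` is
`∑ᵢ (k choose i) xⁱ g⁽ᵏ⁻ⁱ⁾(0)`, so the first three derivatives at `0` of an ordered product
`∏ⱼ exp (t • Xⱼ)` follow by induction on the number of factors. The reversed product is the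
ordered product in the opposite algebra `Aᵐᵒᵖ`, so the same formula, read with all products
reversed, gives its third derivative. Averaging the two, the terms `Xⱼ²Xₖ + XⱼXₖ²` over `j < k`
and their reversals over `j < k` combine into one sum over `j ≠ k`.
-/

section MulOpposite

variable {𝕜 : Type*} [NontriviallyNormedField 𝕜] {F : Type*} [NormedAddCommGroup F]
  [NormedSpace 𝕜 F]

theorem ContDiff.unop {n : WithTop ℕ∞} {g : 𝕜 → Fᵐᵒᵖ} (hg : ContDiff 𝕜 n g) :
    ContDiff 𝕜 n fun t => (g t).unop :=
  ((MulOpposite.opContinuousLinearEquiv 𝕜).symm.contDiff.comp hg :)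

theorem iteratedDeriv_unop (g : 𝕜 → Fᵐᵒᵖ) (k : ℕ) (x : 𝕜) :
    iteratedDeriv k (fun t => (g t).unop) x = (iteratedDeriv k g x).unop :=
  congrArg (· fun _ => 1)
    ((MulOpposite.opContinuousLinearEquiv 𝕜).symm.iteratedFDeriv_comp_left (f := g) (x := x)
      (i := k))

end MulOpposite

section ExpProd

variable (𝕂 : Type*) [RCLike 𝕂] {𝔸 : Type*} [NormedRing 𝔸] [NormedAlgebra 𝕂 𝔸]

noncomputable def expProd (L : List 𝔸) (t : 𝕂) : 𝔸 := (L.map fun x => exp (t • x)).prod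

variable {𝕂}

theorem expProd_nil : expProd 𝕂 ([] : List 𝔸) = fun _ => 1 := rfl

theorem expProd_cons (x : 𝔸) (L : List 𝔸) :
    expProd 𝕂 (x :: L) = fun t => exp (t • x) * expProd 𝕂 L t := by
  ext t
  simp [expProd]

theorem expProd_zero (L : List 𝔸) : expProd 𝕂 L 0 = 1 := by
  simp [expProd]

variable [CompleteSpace 𝔸]

theorem contDiff_exp_smul_const (x : 𝔸) {n : WithTop ℕ∞} :
    ContDiff 𝕂 n fun t : 𝕂 => exp (t • x) :=
  contDiff_iff_contDiffAt.2 fun t =>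
    ((exp_analytic (t • x)).comp (f := fun u : 𝕂 => u • x) (by fun_prop)).contDiffAt

theorem iteratedDeriv_exp_smul_const (x : 𝔸) (k : ℕ) :
    iteratedDeriv k (fun t : 𝕂 => exp (t • x)) = fun t => x ^ k * exp (t • x) := by
  induction k with
  | zero => simp
  | succ k ih =>
    ext t
    rw [iteratedDeriv_succ, ih, ((hasDerivAt_exp_smul_const' x t).const_mul _).deriv, pow_succ,
      mul_assoc]

theorem contDiff_expProd (L : List 𝔸) {n : WithTop ℕ∞} : ContDiff 𝕂 n (expProd 𝕂 L) := by
  induction L with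
  | nil => exact contDiff_const
  | cons x L ih => rw [expProd_cons]; exact (contDiff_exp_smul_const x).mul ih

theorem iteratedDeriv_expProd_cons_zero (x : 𝔸) (L : List 𝔸) (k : ℕ) :
    iteratedDeriv k (expProd 𝕂 (x :: L)) 0 =
      ∑ i ∈ Finset.range (k + 1),
        k.choose i • (x ^ i * iteratedDeriv (k - i) (expProd 𝕂 L) 0) := by
  rw [expProd_cons, iteratedDeriv_fun_mul (contDiff_exp_smul_const x).contDiffAt
    (contDiff_expProd L).contDiffAt]
  simp [iteratedDeriv_exp_smul_const, nsmul_eq_mul, mul_assoc]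

theorem iteratedDeriv_one_expProd_ofFn_zero {n : ℕ} (X : Fin n → 𝔸) :
    iteratedDeriv 1 (expProd 𝕂 (List.ofFn X)) 0 = ∑ j, X j := by
  induction n with
  | zero => simp [expProd_nil, iteratedDeriv_const]
  | succ n ih =>
    rw [List.ofFn_succ, iteratedDeriv_expProd_cons_zero, Fin.sum_univ_succ, ← ih]
    simp [Finset.sum_range_succ, expProd_zero, add_comm]

theorem iteratedDeriv_two_expProd_ofFn_zero {n : ℕ} (X : Fin n → 𝔸) :
    iteratedDeriv 2 (expProd 𝕂 (List.ofFn X)) 0 =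
      ∑ j, X j ^ 2 + 2 • ∑ j, ∑ k, if j < k then X j * X k else 0 := by
  induction n with
  | zero => simp [expProd_nil, iteratedDeriv_const]
  | succ n ih =>
    rw [List.ofFn_succ, iteratedDeriv_expProd_cons_zero]
    simp only [Finset.sum_range_succ, Finset.sum_range_zero, Nat.choose_zero_right,
      Nat.choose_one_right, Nat.choose_self, Nat.reduceSub, iteratedDeriv_zero, expProd_zero, ih,
      iteratedDeriv_one_expProd_ofFn_zero]
    simp only [Fin.sum_univ_succ, Fin.succ_lt_succ_iff, Fin.succ_pos, Fin.not_lt_zero, if_true,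
      if_false]
    simp only [zero_add, pow_zero, pow_one, one_mul, mul_one, one_smul, Finset.mul_sum,
      smul_add]
    abel

theorem iteratedDeriv_three_expProd_ofFn_zero {n : ℕ} (X : Fin n → 𝔸) :
    iteratedDeriv 3 (expProd 𝕂 (List.ofFn X)) 0 =
      ∑ j, X j ^ 3 + 3 • (∑ j, ∑ k, if j < k then X j ^ 2 * X k + X j * X k ^ 2 else 0)
        + 6 • ∑ j, ∑ k, ∑ l, if j < k ∧ k < l then X j * X k * X l else 0 := by
  induction n with
  | zero => simp [expProd_nil, iteratedDeriv_const]
  | succ n ih =>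
    rw [List.ofFn_succ, iteratedDeriv_expProd_cons_zero]
    simp only [Finset.sum_range_succ, Finset.sum_range_zero, Nat.choose_zero_right,
      Nat.choose_one_right, Nat.choose_self, show Nat.choose 3 2 = 3 from rfl, Nat.reduceSub,
      iteratedDeriv_zero, expProd_zero, ih, iteratedDeriv_one_expProd_ofFn_zero,
      iteratedDeriv_two_expProd_ofFn_zero]
    simp only [Fin.sum_univ_succ, Fin.succ_lt_succ_iff, Fin.succ_pos, Fin.not_lt_zero, true_and,
      false_and, and_false, if_true, if_false, Finset.sum_const_zero]
    simp only [zero_add, add_zero, pow_zero, pow_one, one_mul, mul_one, one_smul, Finset.mul_sum,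
      mul_ite, mul_zero, ← mul_assoc, mul_add, mul_smul_comm, smul_add, smul_smul,
      Finset.sum_add_distrib]
    abel

end ExpProd

theorem sum_sum_ite_ne_eq_sum_sum_ite_lt {ι M : Type*} [Fintype ι] [LinearOrder ι]
    [AddCommMonoid M] (f : ι → ι → M) :
    ∑ j, ∑ k, (if j ≠ k then f j k else 0) =
      ∑ j, ∑ k, (if j < k then f j k else 0) + ∑ j, ∑ k, (if j < k then f k j else 0) := by
  rw [Finset.sum_comm (f := fun j k => if j < k then f k j else 0), ← Finset.sum_add_distrib]
  refine Finset.sum_congr rfl fun j _ => ?_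
  rw [← Finset.sum_add_distrib]
  refine Finset.sum_congr rfl fun k _ => ?_
  rcases lt_trichotomy j k with h | rfl | h
  · simp [h, h.ne, h.asymm]
  · simp
  · simp [h, h.ne', h.asymm]

open MulOpposite in
theorem symTrotter_eq_expProd {A : Type*} [NormedRing A] [NormedAlgebra ℂ A] [CompleteSpace A]
    {n : ℕ} (X : Fin n → A) :
    symTrotter X = fun s => (1 / 2 : ℝ) •
      (expProd ℝ (List.ofFn X) s + (expProd ℝ (List.ofFn fun j => op (X j)) s).unop) := by
  ext s
  simp [symTrotter, expProd, List.map_ofFn, unop_list_prod, Function.comp_def, ← op_smul]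

theorem stmt_8_general {A : Type*} [NormedRing A] [NormedAlgebra ℂ A]
    [CompleteSpace A] (n : ℕ) (X : Fin n → A) :
    iteratedDeriv 3 (symTrotter X) 0
      = (∑ j : Fin n, (X j) ^ 3)
        + (3 / 2 : ℝ) • (∑ j : Fin n, ∑ k : Fin n,
            (if j ≠ k then (X j) ^ 2 * X k + X j * (X k) ^ 2 else 0))
        + (3 : ℝ) • (∑ j : Fin n, ∑ k : Fin n, ∑ l : Fin n,
            (if j < k ∧ k < l then X j * X k * X l + X l * X k * X j else 0)) := by
  rw [symTrotter_eq_expProd, iteratedDeriv_fun_const_smul_field,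
    iteratedDeriv_fun_add (contDiff_expProd _).contDiffAt (contDiff_expProd _).unop.contDiffAt,
    iteratedDeriv_unop, iteratedDeriv_three_expProd_ofFn_zero,
    iteratedDeriv_three_expProd_ofFn_zero, sum_sum_ite_ne_eq_sum_sum_ite_lt]
  simp only [MulOpposite.unop_add, MulOpposite.unop_smul, Finset.unop_sum,
    apply_ite MulOpposite.unop, MulOpposite.unop_mul, MulOpposite.unop_pow, MulOpposite.unop_op,
    MulOpposite.unop_zero, ← mul_assoc, ite_add_zero, Finset.sum_add_distrib]
  module

/-- The third-order Taylor coefficient `3!·Â₃` of the symmetrized Trotter product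
(equation 18 of the paper):
`F'''(0) = Σ_j X_j³ + (3/2) Σ_{j≠k} (X_j² X_k + X_j X_k²)
  + 3 Σ_{j<k<l} (X_j X_k X_l + X_l X_k X_j)`. -/
theorem stmt_8 {A : Type*} [NormedRing A] [NormedAlgebra ℂ A]
    [CompleteSpace A] [NormOneClass A] (n : ℕ) (X : Fin n → A) :
    iteratedDeriv 3 (symTrotter X) 0
      = (∑ j : Fin n, (X j) ^ 3)
        + (3 / 2 : ℝ) • (∑ j : Fin n, ∑ k : Fin n,
            (if j ≠ k then (X j) ^ 2 * X k + X j * (X k) ^ 2 else 0))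
        + (3 : ℝ) • (∑ j : Fin n, ∑ k : Fin n, ∑ l : Fin n,
            (if j < k ∧ k < l then X j * X k * X l + X l * X k * X j else 0)) :=
  stmt_8_general n X
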